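/- Let n be an odd positive integer and let x, y : Fin n → ℤ satisfy x j ∈ {−1, 1} and y j ∈ {−1, 1} for all j. Then (Im (∏_{j} ((x j : ℂ) + Complex.I * (y j : ℂ))))² = 2^(n−1). That is, every deterministic ±1 assignment yields MABK value exactly +2^{(n−1)/2} or −2^{(n−1)/2}, so the noncontextual bound 2^{(n−1)/2} is attained. -/

import Mathlib

/-!
Each factor `x j + i y j` squares to `2 i x j y j`, so the square of the product is `(2 i)^n` times
an integer, which is purely imaginary for odd `n`. Hence the real and imaginary parts of the product
have equal squares, and these add up to its squared modulus `2^n`.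
-/

open Complex

namespace Complex

lemma add_I_mul_sq_of_sq_eq {a b : ℂ} (h : a ^ 2 = b ^ 2) :
    (a + I * b) ^ 2 = 2 * I * (a * b) := by
  linear_combination h + b ^ 2 * I_sq

lemma normSq_intCast_add_I_mul (a b : ℤ) : normSq (a + I * b) = a ^ 2 + b ^ 2 := by
  rw [mul_comm, ← ofReal_intCast, ← ofReal_intCast, normSq_add_mul_I]

lemma re_ofReal_mul_I_pow_of_odd (r : ℝ) {n : ℕ} (hn : Odd n) : ((r * I) ^ n).re = 0 := by
  obtain ⟨k, rfl⟩ := hn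
  have hsq : (r * I) ^ 2 = ((-r ^ 2 : ℝ) : ℂ) := by
    push_cast
    linear_combination r ^ 2 * I_sq
  rw [pow_succ, pow_mul, hsq, ← ofReal_pow, re_ofReal_mul, mul_I_re, ofReal_im]
  simp

lemma two_mul_im_sq_of_re_sq_eq_zero {z : ℂ} (h : (z ^ 2).re = 0) :
    2 * z.im ^ 2 = normSq z := by
  rw [sq, mul_re] at h
  rw [normSq_apply]
  linear_combination -h

section SignVectors

variable {ι : Type*} [Fintype ι] {x y : ι → ℤ}

lemma prod_intCast_add_I_mul_sq (hx : ∀ j, x j ^ 2 = 1) (hy : ∀ j, y j ^ 2 = 1) :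
    (∏ j, ((x j : ℂ) + I * y j)) ^ 2 =
      (2 * I) ^ Fintype.card ι * ((∏ j, x j * y j : ℤ) : ℂ) := by
  have h (j : ι) : ((x j : ℂ) + I * y j) ^ 2 = 2 * I * ((x j * y j : ℤ) : ℂ) := by
    push_cast
    exact add_I_mul_sq_of_sq_eq (by exact_mod_cast (hx j).trans (hy j).symm)
  rw [← Finset.prod_pow, Finset.prod_congr rfl fun j _ => h j, Finset.prod_mul_distrib,
    Finset.prod_const, Finset.card_univ, Int.cast_prod]

lemma normSq_prod_intCast_add_I_mul (hx : ∀ j, x j ^ 2 = 1) (hy : ∀ j, y j ^ 2 = 1) :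
    normSq (∏ j, ((x j : ℂ) + I * y j)) = 2 ^ Fintype.card ι := by
  have h (j : ι) : (x j : ℝ) ^ 2 + (y j : ℝ) ^ 2 = 2 := by
    norm_cast
    rw [hx j, hy j]
    rfl
  simp only [map_prod, normSq_intCast_add_I_mul, h, Finset.prod_const, Finset.card_univ]

end SignVectors

end Complex

theorem mabk_nchv_value_sq (n : ℕ) (hodd : Odd n)
    (x y : Fin n → ℤ)
    (hx : ∀ j, x j = -1 ∨ x j = 1) (hy : ∀ j, y j = -1 ∨ y j = 1) :
    ((∏ j, ((x j : ℂ) + Complex.I * (y j : ℂ))).im) ^ 2 = 2 ^ (n - 1) := by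
  have hx2 (j : Fin n) : x j ^ 2 = 1 := sq_eq_one_iff.mpr (hx j).symm
  have hy2 (j : Fin n) : y j ^ 2 = 1 := sq_eq_one_iff.mpr (hy j).symm
  have hre : ((∏ j, ((x j : ℂ) + I * y j)) ^ 2).re = 0 := by
    rw [prod_intCast_add_I_mul_sq hx2 hy2, Fintype.card_fin, ← ofReal_intCast, re_mul_ofReal,
      ← ofReal_ofNat, re_ofReal_mul_I_pow_of_odd 2 hodd, zero_mul]
  have him := two_mul_im_sq_of_re_sq_eq_zero hre
  rw [normSq_prod_intCast_add_I_mul hx2 hy2, Fintype.card_fin,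
    ← pow_sub_one_mul hodd.pos.ne'] at him
  linarith
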